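/- For positive integers α, β and all n ≥ 0 and 0 ≤ k ≤ n: E_{n,k}(α,β,q) = Σ_{j=0}^{k} (-1)^{k-j} q^{binom(k-j,2)} · qbinom(n+α+β, k-j) · qbinom(j+α+β-1, j) · [β+j]^n, where E_{n,k} is defined by E_{0,0}=1 and E_{n,k} = q^(β+k-1)[n-k+α]E_{n-1,k-1} + [k+β]E_{n-1,k} (zero outside 0 ≤ k ≤ n). -/

import Mathlib

open Finset

noncomputable section

abbrev K : Type := RatFunc ℚ

def qq : K := RatFunc.X

def qint (m : ℕ) : K := ∑ i ∈ Finset.range m, qq ^ i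

def qfact (m : ℕ) : K := ∏ i ∈ Finset.range m, qint (i + 1)

def qbinom (a b : ℕ) : K := qfact a / (qfact b * qfact (a - b))

def E (α β : ℕ) : ℕ → ℕ → K
  | 0, k => if k = 0 then 1 else 0
  | n + 1, 0 => qint β * E α β n 0
  | n + 1, k + 1 =>
      qq ^ (β + k) * qint (n - k + α) * E α β n k + qint (k + 1 + β) * E α β n (k + 1)

def poch (N : ℕ) : PowerSeries K :=
  ∏ i ∈ Finset.range N, (1 - PowerSeries.C (qq ^ i) * PowerSeries.X)

/-!
Both sides satisfy the recurrence defining `E`. For the explicit sum, the step to `k + 1 ≤ n + 1`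
holds term by term, by the q-Pascal rule and the absorption identity
`[i+1] qbinom N (i+1) = [N-i] qbinom N i`. The real content is the boundary value: the sum
vanishes at `k = n + 1`. Its terms there are `c j * [β+j]^n`, and
`[β+j]^n = ((1 - q^β q^j) / (1 - q))^n` is a polynomial of degree `n` in `q^j`, so it suffices
that `∑ j, c j * (q^j)^r = 0` for `r ≤ n`. That sum is the coefficient of `X^(n+1)` in
`poch (n+α+β) X / poch (α+β) (q^r X)`, and this quotient is a product of only `n` linear factors.
-/

lemma qq_pow_ne_one {m : ℕ} (hm : m ≠ 0) : qq ^ m ≠ 1 := by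
  intro h
  have hdeg := congrArg RatFunc.intDegree h
  rw [qq, ← RatFunc.algebraMap_X, ← map_pow, RatFunc.intDegree_polynomial, RatFunc.intDegree_one,
    Polynomial.natDegree_X_pow] at hdeg
  exact hm (by exact_mod_cast hdeg)

lemma one_sub_mul_qint (m : ℕ) : (1 - qq) * qint m = 1 - qq ^ m :=
  mul_neg_geom_sum qq m

lemma qint_ne_zero {m : ℕ} (hm : m ≠ 0) : qint m ≠ 0 := fun h =>
  qq_pow_ne_one hm (sub_eq_zero.mp (by rw [← one_sub_mul_qint, h, mul_zero])).symm

lemma qint_eq_inv_mul (m : ℕ) : qint m = (1 - qq)⁻¹ * (1 - qq ^ m) := by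
  have hq : (1 : K) - qq ≠ 0 := sub_ne_zero.mpr (by simpa using (qq_pow_ne_one one_ne_zero).symm)
  rw [← one_sub_mul_qint, inv_mul_cancel_left₀ hq]

lemma qint_add (a b : ℕ) : qint (a + b) = qint a + qq ^ a * qint b := by
  simp only [qint, sum_range_add, pow_add, mul_sum]

lemma qfact_zero : qfact 0 = 1 := prod_range_zero _

lemma qfact_succ (m : ℕ) : qfact (m + 1) = qfact m * qint (m + 1) := prod_range_succ _ _

lemma qfact_ne_zero (m : ℕ) : qfact m ≠ 0 :=
  prod_ne_zero_iff.mpr fun i _ => qint_ne_zero i.succ_ne_zero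

lemma qbinom_zero_right (a : ℕ) : qbinom a 0 = 1 := by
  simp [qbinom, qfact_zero, qfact_ne_zero]

lemma qbinom_self (a : ℕ) : qbinom a a = 1 := by
  simp [qbinom, qfact_zero, qfact_ne_zero]

lemma qbinom_succ_succ {N i : ℕ} (h : i < N) :
    qbinom (N + 1) (i + 1) = qbinom N (i + 1) + qq ^ (N - i) * qbinom N i := by
  obtain ⟨m, rfl⟩ := Nat.exists_eq_add_of_lt h
  have hsplit : qint (i + m + 1 + 1) = qint (m + 1) + qq ^ (m + 1) * qint (i + 1) := by
    rw [← qint_add]; ring_nf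
  simp only [qbinom, show i + m + 1 + 1 - (i + 1) = m + 1 by omega,
    show i + m + 1 - (i + 1) = m by omega, show i + m + 1 - i = m + 1 by omega, qfact_succ, hsplit]
  field_simp [qfact_ne_zero, qint_ne_zero]

lemma qint_succ_mul_qbinom_succ {N i : ℕ} (h : i < N) :
    qint (i + 1) * qbinom N (i + 1) = qint (N - i) * qbinom N i := by
  obtain ⟨m, rfl⟩ := Nat.exists_eq_add_of_lt h
  simp only [qbinom, show i + m + 1 - (i + 1) = m by omega, show i + m + 1 - i = m + 1 by omega,
    qfact_succ]
  field_simp [qfact_ne_zero, qint_ne_zero]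

lemma triangle_succ (i : ℕ) : (i + 1) * (i + 1 - 1) / 2 = i * (i - 1) / 2 + i := by
  simp only [← Nat.choose_two_right, Nat.choose_succ_succ', Nat.choose_one_right, add_comm]

def pochCoeff (N i : ℕ) : K := (-1) ^ i * qq ^ (i * (i - 1) / 2) * qbinom N i

lemma pochCoeff_zero_right (N : ℕ) : pochCoeff N 0 = 1 := by
  simp [pochCoeff, qbinom_zero_right]

lemma pochCoeff_succ_right (N i : ℕ) :
    pochCoeff N (i + 1) = -qq ^ i * ((-1) ^ i * qq ^ (i * (i - 1) / 2)) * qbinom N (i + 1) := by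
  rw [pochCoeff, triangle_succ, pow_add, pow_succ]
  ring

lemma pochCoeff_succ_succ {N i : ℕ} (h : i < N) :
    pochCoeff (N + 1) (i + 1) = pochCoeff N (i + 1) - qq ^ N * pochCoeff N i := by
  rw [pochCoeff_succ_right, pochCoeff_succ_right, qbinom_succ_succ h, pochCoeff,
    show N = N - i + i by omega, pow_add, Nat.add_sub_cancel]
  ring

lemma pochCoeff_succ_self (N : ℕ) : pochCoeff (N + 1) (N + 1) = -(qq ^ N * pochCoeff N N) := by
  rw [pochCoeff_succ_right, pochCoeff, qbinom_self, qbinom_self]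
  ring

lemma qint_succ_mul_pochCoeff_succ {N i : ℕ} (h : i < N) :
    qint (i + 1) * pochCoeff N (i + 1) = -(qq ^ i * qint (N - i) * pochCoeff N i) := by
  rw [pochCoeff_succ_right, pochCoeff]
  linear_combination (-qq ^ i * ((-1) ^ i * qq ^ (i * (i - 1) / 2))) * qint_succ_mul_qbinom_succ h

lemma pochCoeff_succ_mul_qint {N A b i : ℕ} (hN : A + b + i = N) (hi : i < N) :
    pochCoeff (N + 1) (i + 1) * qint b =
      qq ^ (b + i) * qint A * pochCoeff N i + qint (b + i + 1) * pochCoeff N (i + 1) := by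
  have hsplit : qint (b + i + 1) = qint b + qq ^ b * qint (i + 1) := qint_add b (i + 1)
  have hsplit' : qint (N - i) = qint A + qq ^ A * qint b := by
    rw [← qint_add]; congr 1; omega
  have hpow : qq ^ N = qq ^ A * qq ^ (b + i) := by rw [← pow_add]; congr 1; omega
  rw [pochCoeff_succ_succ hi, hsplit, hpow, pow_add]
  linear_combination -qq ^ b * qint_succ_mul_pochCoeff_succ hi
    + qq ^ b * qq ^ i * pochCoeff N i * hsplit'

def explicitE (α β n k : ℕ) : K :=
  ∑ j ∈ range (k + 1), pochCoeff (n + α + β) (k - j) * qbinom (j + α + β - 1) j * qint (β + j) ^ n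

lemma explicitE_zero_right (α β n : ℕ) : explicitE α β n 0 = qint β ^ n := by
  simp [explicitE, pochCoeff_zero_right, qbinom_zero_right]

lemma explicitE_succ_succ {α β n k : ℕ} (hαβ : 1 ≤ α + β) (hk : k ≤ n) :
    explicitE α β (n + 1) (k + 1) =
      qq ^ (β + k) * qint (n - k + α) * explicitE α β n k +
        qint (k + 1 + β) * explicitE α β n (k + 1) := by
  have hterm : ∀ j ∈ range (k + 1),
      pochCoeff (n + 1 + α + β) (k + 1 - j) * qbinom (j + α + β - 1) j * qint (β + j) ^ (n + 1) =
        qq ^ (β + k) * qint (n - k + α) *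
            (pochCoeff (n + α + β) (k - j) * qbinom (j + α + β - 1) j * qint (β + j) ^ n) +
          qint (k + 1 + β) *
            (pochCoeff (n + α + β) (k + 1 - j) * qbinom (j + α + β - 1) j * qint (β + j) ^ n) := by
    intro j hj
    have hjk : j ≤ k := Nat.lt_succ_iff.mp (mem_range.mp hj)
    have hrec := pochCoeff_succ_mul_qint (N := n + α + β) (A := n - k + α) (b := β + j) (i := k - j)
      (by omega) (by omega)
    rw [show β + j + (k - j) = β + k by omega, show β + k + 1 = k + 1 + β by omega] at hrec
    rw [show n + 1 + α + β = n + α + β + 1 by omega, Nat.sub_add_comm hjk, pow_succ]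
    linear_combination qbinom (j + α + β - 1) j * qint (β + j) ^ n * hrec
  rw [explicitE, sum_range_succ, sum_congr rfl hterm, sum_add_distrib, ← mul_sum, ← mul_sum,
    explicitE, explicitE, sum_range_succ _ (k + 1), pow_succ, show β + (k + 1) = k + 1 + β by omega]
  simp only [Nat.sub_self, pochCoeff_zero_right]
  ring

section PowerSeries

open PowerSeries

lemma coeff_zero_mul_one_sub_C_mul_X {R : Type*} [CommRing R] (f : R⟦X⟧) (c : R) :
    coeff 0 (f * (1 - C c * X)) = coeff 0 f := by
  simp [mul_sub, ← mul_assoc]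

lemma coeff_succ_mul_one_sub_C_mul_X {R : Type*} [CommRing R] (f : R⟦X⟧) (c : R) (n : ℕ) :
    coeff (n + 1) (f * (1 - C c * X)) = coeff (n + 1) f - c * coeff n f := by
  rw [mul_sub, mul_one, map_sub, mul_left_comm, coeff_C_mul, coeff_succ_mul_X]

lemma coeff_prod_one_sub_C_mul_X_of_card_lt {R ι : Type*} [CommRing R] (s : Finset ι)
    (c : ι → R) {m : ℕ} (hm : #s < m) : coeff m (∏ i ∈ s, (1 - C (c i) * X)) = 0 := by
  have hcoe : ∏ i ∈ s, (1 - C (c i) * X) =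
      ((∏ i ∈ s, (1 - Polynomial.C (c i) * Polynomial.X) : Polynomial R) : R⟦X⟧) := by
    rw [← Polynomial.coeToPowerSeries.ringHom_apply, map_prod]
    simp [Polynomial.coeToPowerSeries.ringHom_apply]
  rw [hcoe, Polynomial.coeff_coe]
  refine Polynomial.coeff_eq_zero_of_natDegree_lt (lt_of_le_of_lt ?_ hm)
  calc _ ≤ ∑ i ∈ s, (1 - Polynomial.C (c i) * Polynomial.X).natDegree :=
        Polynomial.natDegree_prod_le _ _
    _ ≤ ∑ _i ∈ s, 1 := by gcongr; compute_degree
    _ = #s := by simp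

lemma rescale_one_sub_C_mul_X {R : Type*} [CommRing R] (a c : R) :
    rescale a (1 - C c * X) = 1 - C (c * a) * X := by
  ext n
  rw [coeff_rescale]
  rcases n with _ | _ | n <;> simp [coeff_X, coeff_one, mul_comm]

lemma poch_succ (N : ℕ) : poch (N + 1) = poch N * (1 - C (qq ^ N) * X) :=
  prod_range_succ _ _

lemma coeff_poch {N i : ℕ} (h : i ≤ N) : coeff i (poch N) = pochCoeff N i := by
  induction N generalizing i with
  | zero =>
    obtain rfl : i = 0 := Nat.le_zero.mp h
    simp [poch, pochCoeff_zero_right]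
  | succ N ih =>
    rw [poch_succ]
    cases i with
    | zero => rw [coeff_zero_mul_one_sub_C_mul_X, ih (Nat.zero_le _), pochCoeff_zero_right,
        pochCoeff_zero_right]
    | succ i =>
      rw [coeff_succ_mul_one_sub_C_mul_X, ih (i := i) (by omega)]
      rcases (Nat.lt_succ_iff.mp h).lt_or_eq with hi | rfl
      · rw [ih hi, pochCoeff_succ_succ hi]
      · rw [poch, coeff_prod_one_sub_C_mul_X_of_card_lt _ _ (by simp), pochCoeff_succ_self]
        ring

lemma mk_qbinom_mul_one_sub (γ : ℕ) :
    PowerSeries.mk (fun j => qbinom (j + (γ + 1)) j) * (1 - C (qq ^ (γ + 1)) * X) =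
      PowerSeries.mk (fun j => qbinom (j + γ) j) := by
  ext (_ | j)
  · simp [qbinom_zero_right]
  · rw [coeff_succ_mul_one_sub_C_mul_X, coeff_mk, coeff_mk, coeff_mk,
      show j + 1 + (γ + 1) = j + γ + 1 + 1 by omega, show j + (γ + 1) = j + γ + 1 by omega,
      qbinom_succ_succ (by omega), show j + γ + 1 - j = γ + 1 by omega,
      show j + 1 + γ = j + γ + 1 by omega]
    ring

lemma poch_mul_mk_qbinom (γ : ℕ) :
    poch (γ + 1) * PowerSeries.mk (fun j => qbinom (j + γ) j) = 1 := by
  induction γ with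
  | zero =>
    rw [poch_succ, poch, prod_range_zero, one_mul, mul_comm]
    ext (_ | j)
    · simp [qbinom_zero_right]
    · rw [coeff_succ_mul_one_sub_C_mul_X]
      simp [qbinom_self, coeff_one]
  | succ γ ih => rw [poch_succ, mul_assoc, mul_comm (1 - _), mk_qbinom_mul_one_sub, ih]

lemma rescale_poch (r γ : ℕ) :
    rescale (qq ^ r) (poch γ) = ∏ i ∈ Ico r (r + γ), (1 - C (qq ^ i) * X) := by
  rw [poch, map_prod, prod_Ico_eq_prod_range, Nat.add_sub_cancel_left]
  simp only [rescale_one_sub_C_mul_X, ← pow_add, add_comm r]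

lemma sum_pochCoeff_mul_qbinom_mul_pow_eq_zero {γ n r : ℕ} (hr : r ≤ n) :
    ∑ j ∈ range (n + 2), pochCoeff (n + γ + 1) (n + 1 - j) * qbinom (j + γ) j * (qq ^ j) ^ r =
      0 := by
  have hsub : Ico r (r + (γ + 1)) ⊆ range (n + γ + 1) := fun x hx => by
    simp only [mem_Ico, mem_range] at hx ⊢; omega
  have hprod : rescale (qq ^ r) (PowerSeries.mk fun j => qbinom (j + γ) j) * poch (n + γ + 1) =
      ∏ i ∈ range (n + γ + 1) \ Ico r (r + (γ + 1)), (1 - C (qq ^ i) * X) := by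
    rw [poch, ← prod_sdiff hsub, ← rescale_poch, mul_left_comm, ← map_mul, mul_comm _ (poch _),
      poch_mul_mk_qbinom, map_one, mul_one]
  have hcard : #(range (n + γ + 1) \ Ico r (r + (γ + 1))) < n + 1 := by
    rw [card_sdiff_of_subset hsub, card_range, Nat.card_Ico]; omega
  have hcoeff := congrArg (coeff (n + 1)) hprod
  rw [coeff_prod_one_sub_C_mul_X_of_card_lt _ _ hcard, coeff_mul,
    Nat.sum_antidiagonal_eq_sum_range_succ_mk] at hcoeff
  rw [← hcoeff]
  refine sum_congr rfl fun j hj => ?_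
  rw [coeff_rescale, coeff_mk, coeff_poch (by omega), ← pow_mul, ← pow_mul, mul_comm j]
  ring

end PowerSeries

lemma sum_mul_eval_eq_zero_of_sum_mul_pow_eq_zero {R ι : Type*} [CommRing R] {s : Finset ι}
    {c x : ι → R} {n : ℕ} (h : ∀ r ≤ n, ∑ j ∈ s, c j * x j ^ r = 0) {P : Polynomial R}
    (hP : P.natDegree ≤ n) : ∑ j ∈ s, c j * P.eval (x j) = 0 := by
  simp only [Polynomial.eval_eq_sum_range' (Nat.lt_succ_of_le hP), mul_sum]
  rw [sum_comm]
  refine sum_eq_zero fun r hr => ?_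
  simp only [mul_left_comm (c _), ← mul_sum]
  rw [h r (Nat.lt_succ_iff.mp (mem_range.mp hr)), mul_zero]

lemma explicitE_succ_self {α β : ℕ} (hαβ : 1 ≤ α + β) (n : ℕ) : explicitE α β n (n + 1) = 0 := by
  obtain ⟨γ, hγ⟩ := Nat.exists_eq_add_of_le' hαβ
  set P : Polynomial K :=
    (Polynomial.C (1 - qq)⁻¹ * (1 - Polynomial.C (qq ^ β) * Polynomial.X)) ^ n
  have hP : ∀ j, qint (β + j) ^ n = P.eval (qq ^ j) := fun j => by
    simp [P, qint_eq_inv_mul, pow_add]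
  have hdeg : P.natDegree ≤ n := by simp only [P]; compute_degree
  calc explicitE α β n (n + 1)
      = ∑ j ∈ range (n + 2),
          pochCoeff (n + γ + 1) (n + 1 - j) * qbinom (j + γ) j * P.eval (qq ^ j) := by
        refine sum_congr rfl fun j _ => ?_
        rw [hP, show n + α + β = n + γ + 1 by omega, show j + α + β - 1 = j + γ by omega]
    _ = 0 := sum_mul_eval_eq_zero_of_sum_mul_pow_eq_zero
        (fun r hr => sum_pochCoeff_mul_qbinom_mul_pow_eq_zero hr) hdeg

lemma E_eq_zero_of_lt (α β : ℕ) {n k : ℕ} (h : n < k) : E α β n k = 0 := by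
  induction n generalizing k with
  | zero => obtain ⟨k, rfl⟩ := Nat.exists_eq_add_of_lt h; simp [E]
  | succ n ih =>
    obtain ⟨k, rfl⟩ := Nat.exists_eq_add_of_lt (Nat.zero_lt_of_lt h)
    rw [E, ih (by omega), ih (by omega), mul_zero, mul_zero, add_zero]

theorem E_explicit_formula_general (α β : ℕ) (hα : 1 ≤ α) (n k : ℕ) (hk : k ≤ n) :
    E α β n k =
      ∑ j ∈ Finset.range (k + 1),
        (-1 : K) ^ (k - j) * qq ^ ((k - j) * (k - j - 1) / 2) *
          qbinom (n + α + β) (k - j) * qbinom (j + α + β - 1) j * qint (β + j) ^ n := by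
  change E α β n k = explicitE α β n k
  have hαβ : 1 ≤ α + β := le_add_right hα
  induction n generalizing k with
  | zero =>
    obtain rfl : k = 0 := Nat.le_zero.mp hk
    simp [E, explicitE_zero_right]
  | succ n ih =>
    cases k with
    | zero => rw [E, ih 0 (Nat.zero_le _), explicitE_zero_right, explicitE_zero_right, pow_succ',
        mul_comm]
    | succ k =>
      have hnext : E α β n (k + 1) = explicitE α β n (k + 1) := by
        rcases (Nat.succ_le_succ_iff.mp hk).lt_or_eq with hlt | rfl
        · exact ih _ hlt
        · rw [E_eq_zero_of_lt α β k.lt_succ_self, explicitE_succ_self hαβ]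
      rw [E, ih k (by omega), hnext, explicitE_succ_succ hαβ (Nat.succ_le_succ_iff.mp hk)]

theorem E_explicit_formula (α β : ℕ) (hα : 1 ≤ α) (hβ : 1 ≤ β) (n k : ℕ) (hk : k ≤ n) :
    E α β n k =
      ∑ j ∈ Finset.range (k + 1),
        (-1 : K) ^ (k - j) * qq ^ ((k - j) * (k - j - 1) / 2) *
          qbinom (n + α + β) (k - j) * qbinom (j + α + β - 1) j * qint (β + j) ^ n :=
  E_explicit_formula_general α β hα n k hk

end
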